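/- arXiv:1510.07170 — 2 statements merged into one kernel-verified Lean document; each statement's English description precedes it below -/
import Mathlib

section
/- Let X, S, Z be discrete random variables with X taking values in 𝒳, S taking values in 𝒮, such that X is independent of the pair (S, Z) and X ~ P_X. Then I(S − X; X | Z) ≥ min over pmfs θ on 𝒮 of I(S̃ − X̃; X̃), where X̃ ~ P_X and S̃ ~ θ are independent. -/
open Finset
open scoped Classical

namespace SmartMeter

/-! ### Basic information measures for finitely supported distributions.
All entropies and mutual informations are in bits (base-2 logarithms). -/

/-- Probability that the random variable `Z` takes the value `z` under the pmf `p`. -/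
noncomputable def pr {Ω α : Type*} [Fintype Ω] [DecidableEq α]
    (p : Ω → ℝ) (Z : Ω → α) (z : α) : ℝ :=
  ∑ ω ∈ Finset.univ.filter (fun ω => Z ω = z), p ω

/-- Shannon entropy (in bits) of the random variable `Z` under the pmf `p`. -/
noncomputable def ent {Ω α : Type*} [Fintype Ω] [DecidableEq α]
    (p : Ω → ℝ) (Z : Ω → α) : ℝ :=
  -∑ z ∈ Finset.univ.image Z, pr p Z z * Real.logb 2 (pr p Z z)

/-- Mutual information `I(A; B)`. -/
noncomputable def mutInfo {Ω α β : Type*} [Fintype Ω] [DecidableEq α] [DecidableEq β]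
    (p : Ω → ℝ) (A : Ω → α) (B : Ω → β) : ℝ :=
  ent p A + ent p B - ent p (fun ω => (A ω, B ω))

/-- Conditional entropy `H(A | C)`. -/
noncomputable def condEnt {Ω α γ : Type*} [Fintype Ω] [DecidableEq α] [DecidableEq γ]
    (p : Ω → ℝ) (A : Ω → α) (C : Ω → γ) : ℝ :=
  ent p (fun ω => (A ω, C ω)) - ent p C

/-- Conditional mutual information `I(A; B | C)`. -/
noncomputable def condMutInfo {Ω α β γ : Type*} [Fintype Ω] [DecidableEq α] [DecidableEq β]
    [DecidableEq γ] (p : Ω → ℝ) (A : Ω → α) (B : Ω → β) (C : Ω → γ) : ℝ :=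
  ent p (fun ω => (A ω, C ω)) + ent p (fun ω => (B ω, C ω))
    - ent p (fun ω => (A ω, B ω, C ω)) - ent p C

/-- `p` is a probability mass function on the finite type `Ω`. -/
def IsPMF {Ω : Type*} [Fintype Ω] (p : Ω → ℝ) : Prop :=
  (∀ ω, 0 ≤ p ω) ∧ ∑ ω, p ω = 1

/-- Extension of a pmf on `{0, …, n}` to an integer-indexed function (zero out of range). -/
noncomputable def extZ {n : ℕ} (f : Fin (n + 1) → ℝ) (k : ℤ) : ℝ :=
  if h : 0 ≤ k ∧ k ≤ (n : ℤ) then f ⟨k.toNat, by omega⟩ else 0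

/-! ### The single-letter quantity `J*` -/

/-- `I(S - X; X)` for independent `X ~ PX` on `{0,…,mx}` and `S ~ θ` on `{0,…,ms}`. -/
noncomputable def iidMI (mx ms : ℕ) (PX : Fin (mx + 1) → ℝ) (θ : Fin (ms + 1) → ℝ) : ℝ :=
  mutInfo (fun ω : Fin (mx + 1) × Fin (ms + 1) => PX ω.1 * θ ω.2)
    (fun ω => ((ω.2 : ℕ) : ℤ) - ((ω.1 : ℕ) : ℤ)) (fun ω => ω.1)

/-- `J* = min over pmfs θ on 𝒮 of I(S - X; X)`. -/
noncomputable def Jstar (mx ms : ℕ) (PX : Fin (mx + 1) → ℝ) : ℝ :=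
  sInf {r : ℝ | ∃ θ : Fin (ms + 1) → ℝ, IsPMF θ ∧ iidMI mx ms PX θ = r}

/-! ### The structured policy `b*` -/

/-- `ξ(w) = Σ_{(x,s) : s - x = w} PX(x) θ(s)`, the pmf of `W = S - X`. -/
noncomputable def xiOf (mx ms : ℕ) (PX : Fin (mx + 1) → ℝ) (θ : Fin (ms + 1) → ℝ)
    (w : ℤ) : ℝ :=
  ∑ x : Fin (mx + 1), ∑ s : Fin (ms + 1),
    if ((s : ℕ) : ℤ) - ((x : ℕ) : ℤ) = w then PX x * θ s else 0

/-- The structured policy with respect to `(θ, ξ)`: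
`b(y|w) = PX(y) θ(y + w) / ξ(w)` for `y ∈ 𝒳 ∩ 𝒴₀(w)` (when `ξ(w) > 0`), else `0`. -/
noncomputable def bstar (mx my ms : ℕ) (PX : Fin (mx + 1) → ℝ) (θ : Fin (ms + 1) → ℝ)
    (w : ℤ) (y : Fin (my + 1)) : ℝ :=
  if xiOf mx ms PX θ w = 0 then 0
  else extZ PX ((y : ℕ) : ℤ) * extZ θ (((y : ℕ) : ℤ) + w) / xiOf mx ms PX θ w

/-! ### Trajectory spaces, policies and induced joint laws.
Time is indexed from `0`; `ω = (s₁, x, y)` records the initial battery state `S₁ = ω.1`,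
the demands `X_{t+1} = ω.2.1 t` and the outputs `Y_{t+1} = ω.2.2 t` for `t = 0, …, T-1`. -/

/-- Trajectories of horizon `T`. -/
abbrev Traj (mx my ms T : ℕ) :=
  Fin (ms + 1) × (Fin T → Fin (mx + 1)) × (Fin T → Fin (my + 1))

variable {mx my ms T : ℕ}

/-- Demand at (0-based) time `t`, as an integer (junk value `0` for `t ≥ T`). -/
def Xat (ω : Traj mx my ms T) (t : ℕ) : ℤ :=
  if h : t < T then ((ω.2.1 ⟨t, h⟩ : ℕ) : ℤ) else 0

/-- Output at (0-based) time `t`, as an integer (junk value `0` for `t ≥ T`). -/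
def Yat (ω : Traj mx my ms T) (t : ℕ) : ℤ :=
  if h : t < T then ((ω.2.2 ⟨t, h⟩ : ℕ) : ℤ) else 0

/-- Battery state at (0-based) time `t`: `S_{t+1} = S_t + Y_t - X_t`, `Sat ω 0 = S₁`. -/
def Sat (ω : Traj mx my ms T) (t : ℕ) : ℤ :=
  ((ω.1 : ℕ) : ℤ) + ∑ i ∈ Finset.range t, (Yat ω i - Xat ω i)

/-- `W_t = S_t - X_t`. -/
def Wat (ω : Traj mx my ms T) (t : ℕ) : ℤ := Sat ω t - Xat ω t

/-- A general causal (class `Q_A`) randomized battery policy: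
`q_t(y_t | x^t, s^t, y^{t-1})`; since `s^t` is determined by `(s₁, x^{t-1}, y^{t-1})`,
the policy is a function of `(x^t, s₁, y^{t-1})`. -/
def PolicyA (mx my ms : ℕ) : Type :=
  (t : ℕ) → (Fin (t + 1) → Fin (mx + 1)) → Fin (ms + 1) → (Fin t → Fin (my + 1)) →
    Fin (my + 1) → ℝ

/-- A class-`Q_B` policy: `q_t(y_t | x_t, s_t, y^{t-1})`. -/
def PolicyB (mx my ms : ℕ) : Type :=
  (t : ℕ) → Fin (mx + 1) → ℤ → (Fin t → Fin (my + 1)) → Fin (my + 1) → ℝ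

/-- The battery state `S_t` computed from `s₁` and the history `(x^t, y^{t-1})`. -/
def hstate {t : ℕ} (s1 : Fin (ms + 1)) (x : Fin (t + 1) → Fin (mx + 1))
    (y : Fin t → Fin (my + 1)) : ℤ :=
  ((s1 : ℕ) : ℤ) + ∑ i : Fin t, (((y i : ℕ) : ℤ) - ((x i.castSucc : ℕ) : ℤ))

/-- Each `q_t(· | x^t, s^t, y^{t-1})` is a pmf on `𝒴`. -/
def CondPMFA (q : PolicyA mx my ms) : Prop :=
  ∀ (t : ℕ) (x : Fin (t + 1) → Fin (mx + 1)) (s1 : Fin (ms + 1)) (y : Fin t → Fin (my + 1)),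
    (∀ yt, 0 ≤ q t x s1 y yt) ∧ ∑ yt, q t x s1 y yt = 1

/-- Feasibility of a class-`Q_A` policy: conditional pmfs supported on
`𝒴₀(s_t - x_t) = {y ∈ 𝒴 : s_t - x_t + y ∈ 𝒮}`. -/
def FeasibleA (q : PolicyA mx my ms) : Prop :=
  CondPMFA q ∧
  ∀ (t : ℕ) (x : Fin (t + 1) → Fin (mx + 1)) (s1 : Fin (ms + 1)) (y : Fin t → Fin (my + 1)),
    ∀ yt, q t x s1 y yt ≠ 0 →
      0 ≤ hstate s1 x y - ((x (Fin.last t) : ℕ) : ℤ) + ((yt : ℕ) : ℤ) ∧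
      hstate s1 x y - ((x (Fin.last t) : ℕ) : ℤ) + ((yt : ℕ) : ℤ) ≤ (ms : ℤ)

/-- Each `q_t(· | x_t, s_t, y^{t-1})` is a pmf on `𝒴`. -/
def CondPMFB (q : PolicyB mx my ms) : Prop :=
  ∀ (t : ℕ) (xt : Fin (mx + 1)) (s : ℤ) (y : Fin t → Fin (my + 1)),
    (∀ yt, 0 ≤ q t xt s y yt) ∧ ∑ yt, q t xt s y yt = 1

/-- Feasibility of a class-`Q_B` policy. -/
def FeasibleB (q : PolicyB mx my ms) : Prop :=
  CondPMFB q ∧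
  ∀ (t : ℕ) (xt : Fin (mx + 1)) (s : ℤ) (y : Fin t → Fin (my + 1)),
    0 ≤ s → s ≤ (ms : ℤ) →
    ∀ yt, q t xt s y yt ≠ 0 →
      0 ≤ s - ((xt : ℕ) : ℤ) + ((yt : ℕ) : ℤ) ∧
      s - ((xt : ℕ) : ℤ) + ((yt : ℕ) : ℤ) ≤ (ms : ℤ)

/-- The demand prefix `x^t = (x_0, …, x_t)` of a trajectory. -/
def prefX (ω : Traj mx my ms T) (t : Fin T) : Fin ((t : ℕ) + 1) → Fin (mx + 1) :=
  fun i => ω.2.1 ⟨(i : ℕ), lt_of_le_of_lt (Nat.lt_succ_iff.mp i.isLt) t.isLt⟩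

/-- The output prefix `y^{t-1} = (y_0, …, y_{t-1})` of a trajectory. -/
def prefY (ω : Traj mx my ms T) (t : Fin T) : Fin (t : ℕ) → Fin (my + 1) :=
  fun i => ω.2.2 ⟨(i : ℕ), i.isLt.trans t.isLt⟩

/-- Joint law on trajectories induced by i.i.d. demand `PX`, initial battery pmf `PS1`
(independent of the demand), and a class-`Q_A` policy `q`. -/
noncomputable def jointA (PS1 : Fin (ms + 1) → ℝ) (PX : Fin (mx + 1) → ℝ)
    (q : PolicyA mx my ms) (T : ℕ) (ω : Traj mx my ms T) : ℝ :=
  PS1 ω.1 * ∏ t : Fin T,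
    (PX (ω.2.1 t) * q (t : ℕ) (prefX ω t) ω.1 (prefY ω t) (ω.2.2 t))

/-- Weight of a demand trajectory under a Markov chain `(PX1, Qm)`. -/
noncomputable def markovWt (PX1 : Fin (mx + 1) → ℝ) (Qm : Fin (mx + 1) → Fin (mx + 1) → ℝ)
    {T : ℕ} (x : Fin T → Fin (mx + 1)) : ℝ :=
  ∏ t : Fin T,
    if _h : (t : ℕ) = 0 then PX1 (x t)
    else Qm (x ⟨(t : ℕ) - 1, lt_of_le_of_lt (Nat.sub_le _ _) t.isLt⟩) (x t)

/-- Joint law on trajectories induced by Markov demand and a class-`Q_A` policy. -/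
noncomputable def jointAMarkov (PS1 : Fin (ms + 1) → ℝ) (PX1 : Fin (mx + 1) → ℝ)
    (Qm : Fin (mx + 1) → Fin (mx + 1) → ℝ) (q : PolicyA mx my ms) (T : ℕ)
    (ω : Traj mx my ms T) : ℝ :=
  PS1 ω.1 * markovWt PX1 Qm ω.2.1 *
    ∏ t : Fin T, q (t : ℕ) (prefX ω t) ω.1 (prefY ω t) (ω.2.2 t)

/-- Joint law on trajectories induced by Markov demand and a class-`Q_B` policy. -/
noncomputable def jointBMarkov (PS1 : Fin (ms + 1) → ℝ) (PX1 : Fin (mx + 1) → ℝ)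
    (Qm : Fin (mx + 1) → Fin (mx + 1) → ℝ) (q : PolicyB mx my ms) (T : ℕ)
    (ω : Traj mx my ms T) : ℝ :=
  PS1 ω.1 * markovWt PX1 Qm ω.2.1 *
    ∏ t : Fin T, q (t : ℕ) (ω.2.1 t) (Sat ω (t : ℕ)) (prefY ω t) (ω.2.2 t)

/-- The memoryless time-invariant policy `q_t(y | x, s) = b*(y | s - x)`, as a member of the
class of general causal policies. -/
noncomputable def structuredPolicyA (mx my ms : ℕ) (PX : Fin (mx + 1) → ℝ)
    (θ : Fin (ms + 1) → ℝ) : PolicyA mx my ms :=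
  fun t x s1 y yt => bstar mx my ms PX θ (hstate s1 x y - ((x (Fin.last t) : ℕ) : ℤ)) yt

/-! Conditioning on `Z = z` writes `I(S - X; X | Z)` as the `P(Z = z)`-average of `I(S - X; X)`
under the conditional laws. Independence makes `(X, S)` given `Z = z` distributed as
`PX ⊗ θ_z`, where `θ_z` is the conditional law of `S`, so each term is `iidMI PX θ_z ≥ J*`.
Since `J*` is an `sInf` over reals, this needs the defining set to be bounded below, which is
the nonnegativity of mutual information (Gibbs' inequality via `log t ≤ t - 1`). -/

section InformationMeasures

open Real

variable {Ω Ω' α β γ κ : Type*} [Fintype Ω] [Fintype Ω']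
variable [DecidableEq α] [DecidableEq β] [DecidableEq γ]

lemma pr_nonneg {p : Ω → ℝ} (hp : ∀ ω, 0 ≤ p ω) (Z : Ω → α) (z : α) : 0 ≤ pr p Z z :=
  sum_nonneg fun _ _ => hp _

lemma pr_eq_zero_of_notMem (p : Ω → ℝ) (Z : Ω → α) {z : α} (hz : z ∉ univ.image Z) :
    pr p Z z = 0 :=
  sum_eq_zero fun ω hω => absurd (mem_image.mpr ⟨ω, mem_univ ω, (mem_filter.mp hω).2⟩) hz

lemma sum_pr (p : Ω → ℝ) (Z : Ω → α) : ∑ z ∈ univ.image Z, pr p Z z = ∑ ω, p ω :=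
  sum_fiberwise_of_maps_to (fun ω _ => mem_image_of_mem Z (mem_univ ω)) p

lemma pr_id [DecidableEq Ω] (p : Ω → ℝ) (ω : Ω) : pr p id ω = p ω := by
  simp [pr, filter_eq']

lemma pr_comp_of_injective (p : Ω → ℝ) (Z : Ω → α) {f : α → β} (hf : f.Injective) (z : α) :
    pr p (fun ω => f (Z ω)) (f z) = pr p Z z := by
  simp only [pr, hf.eq_iff]

lemma pr_comp [Fintype κ] [DecidableEq κ] (p : Ω → ℝ) (F : Ω → κ) (f : κ → α) (a : α) :
    pr p (fun ω => f (F ω)) a = ∑ v with f v = a, pr p F v := by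
  rw [pr, ← sum_fiberwise_of_maps_to (g := F) (t := univ.filter (f · = a))
    (fun ω hω => by simpa using hω)]
  refine sum_congr rfl fun v hv => sum_congr ?_ fun _ _ => rfl
  ext ω
  simp only [mem_filter, mem_univ, true_and] at hv ⊢
  constructor
  · exact fun h => h.2
  · rintro rfl; exact ⟨hv, rfl⟩

lemma pr_swap (p : Ω → ℝ) (A : Ω → α) (B : Ω → β) (a : α) (b : β) :
    pr p (fun ω => (B ω, A ω)) (b, a) = pr p (fun ω => (A ω, B ω)) (a, b) :=
  pr_comp_of_injective p (fun ω => (A ω, B ω)) Prod.swap_injective (a, b)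

lemma pr_fst_eq_sum (p : Ω → ℝ) (A : Ω → α) (B : Ω → β) {t : Finset β}
    (ht : univ.image B ⊆ t) (a : α) :
    pr p A a = ∑ b ∈ t, pr p (fun ω => (A ω, B ω)) (a, b) := by
  rw [pr, ← sum_fiberwise_of_maps_to (g := B) (t := t)
    (fun ω _ => ht (mem_image_of_mem B (mem_univ ω)))]
  refine sum_congr rfl fun b _ => ?_
  simp only [pr, filter_filter, Prod.mk.injEq]

lemma pr_snd_eq_sum (p : Ω → ℝ) (A : Ω → α) (B : Ω → β) {t : Finset α}
    (ht : univ.image A ⊆ t) (b : β) :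
    pr p B b = ∑ a ∈ t, pr p (fun ω => (A ω, B ω)) (a, b) := by
  rw [pr_fst_eq_sum p B A ht b]
  exact sum_congr rfl fun a _ => pr_swap p A B a b

lemma pr_pair_le_fst {p : Ω → ℝ} (hp : ∀ ω, 0 ≤ p ω) (A : Ω → α) (B : Ω → β) (a : α) (b : β) :
    pr p (fun ω => (A ω, B ω)) (a, b) ≤ pr p A a := by
  rw [pr_fst_eq_sum p A B (subset_union_left (s₂ := {b})) a]
  exact single_le_sum (fun b _ => pr_nonneg hp _ _) (mem_union_right _ (mem_singleton_self b))

lemma pr_pair_le_snd {p : Ω → ℝ} (hp : ∀ ω, 0 ≤ p ω) (A : Ω → α) (B : Ω → β) (a : α) (b : β) :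
    pr p (fun ω => (A ω, B ω)) (a, b) ≤ pr p B b :=
  pr_swap p A B a b ▸ pr_pair_le_fst hp B A b a

lemma image_pair_subset_product (A : Ω → α) (B : Ω → β) :
    univ.image (fun ω => (A ω, B ω)) ⊆ univ.image A ×ˢ univ.image B := fun _ h => by
  obtain ⟨ω, -, rfl⟩ := mem_image.mp h
  exact mem_product.mpr ⟨mem_image_of_mem A (mem_univ ω), mem_image_of_mem B (mem_univ ω)⟩

lemma ent_eq_sum_negMulLog (p : Ω → ℝ) (Z : Ω → α) {t : Finset α} (ht : univ.image Z ⊆ t) :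
    ent p Z = (∑ z ∈ t, negMulLog (pr p Z z)) / log 2 := by
  rw [ent, sum_subset ht fun z _ hz => by rw [pr_eq_zero_of_notMem p Z hz, zero_mul], sum_div,
    ← sum_neg_distrib]
  simp only [negMulLog, logb]
  exact sum_congr rfl fun _ _ => by ring

lemma ent_congr {p : Ω → ℝ} {q : Ω' → ℝ} {Z : Ω → α} {Z' : Ω' → α}
    (h : ∀ z, pr p Z z = pr q Z' z) : ent p Z = ent q Z' := by
  rw [ent_eq_sum_negMulLog p Z (t := univ.image Z ∪ univ.image Z') subset_union_left,
    ent_eq_sum_negMulLog q Z' (t := univ.image Z ∪ univ.image Z') subset_union_right]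
  simp only [h]

lemma ent_comp_of_injective (p : Ω → ℝ) (Z : Ω → α) {f : α → β} (hf : f.Injective) :
    ent p (fun ω => f (Z ω)) = ent p Z := by
  rw [ent, ent, show univ.image (fun ω => f (Z ω)) = (univ.image Z).image f from image_image.symm,
    sum_image fun _ _ _ _ h => hf h]
  simp only [pr_comp_of_injective p Z hf]

lemma ent_comp_congr [Fintype κ] [DecidableEq κ] {p : Ω → ℝ} {q : Ω' → ℝ}
    {F : Ω → κ} {G : Ω' → κ} (h : ∀ v, pr p F v = pr q G v) (f : κ → α) :
    ent p (fun ω => f (F ω)) = ent q (fun ω => f (G ω)) :=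
  ent_congr fun a => by simp only [pr_comp, h]

lemma mutInfo_comp_congr [Fintype κ] [DecidableEq κ] {p : Ω → ℝ} {q : Ω' → ℝ}
    {F : Ω → κ} {G : Ω' → κ} (h : ∀ v, pr p F v = pr q G v) (f : κ → α) (g : κ → β) :
    mutInfo p (fun ω => f (F ω)) (fun ω => g (F ω))
      = mutInfo q (fun ω => f (G ω)) (fun ω => g (G ω)) := by
  rw [mutInfo, mutInfo, ent_comp_congr h f, ent_comp_congr h g,
    ent_comp_congr h fun v => (f v, g v)]

lemma sub_mul_le_mul_log_sub {x u v : ℝ} (hx : 0 ≤ x) (hxu : x ≤ u) (hxv : x ≤ v) :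
    x - u * v ≤ x * log x - x * log u - x * log v := by
  rcases hx.eq_or_lt with rfl | hx
  · simpa using mul_nonneg hxu hxv
  have hu := hx.trans_le hxu
  have hv := hx.trans_le hxv
  have huv := mul_pos hu hv
  calc x - u * v = u * v * (x / (u * v) - 1) := by field_simp
    _ ≤ u * v * (x / (u * v) * log (x / (u * v))) :=
      mul_le_mul_of_nonneg_left (self_sub_one_le_mul_log (by positivity)) huv.le
    _ = x * log x - x * log u - x * log v := by
      rw [log_div hx.ne' huv.ne', log_mul hu.ne' hv.ne']
      field_simp
      ring

lemma mutInfo_nonneg {p : Ω → ℝ} (hp : IsPMF p) (A : Ω → α) (B : Ω → β) :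
    0 ≤ mutInfo p A B := by
  set P : α → β → ℝ := fun a b => pr p (fun ω => (A ω, B ω)) (a, b)
  have hmA : ∀ a, pr p A a = ∑ b ∈ univ.image B, P a b := pr_fst_eq_sum p A B subset_rfl
  have hmB : ∀ b, pr p B b = ∑ a ∈ univ.image A, P a b := pr_snd_eq_sum p A B subset_rfl
  have hnum : ∑ a ∈ univ.image A, negMulLog (pr p A a)
      + ∑ b ∈ univ.image B, negMulLog (pr p B b)
      - ∑ v ∈ univ.image A ×ˢ univ.image B, negMulLog (pr p (fun ω => (A ω, B ω)) v)
      = ∑ a ∈ univ.image A, ∑ b ∈ univ.image B,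
          (P a b * log (P a b) - P a b * log (pr p A a) - P a b * log (pr p B b)) := by
    have hA : ∀ a, negMulLog (pr p A a) = -∑ b ∈ univ.image B, P a b * log (pr p A a) := by
      intro a; rw [negMulLog, neg_mul, ← sum_mul, ← hmA]
    have hB : ∀ b, negMulLog (pr p B b) = -∑ a ∈ univ.image A, P a b * log (pr p B b) := by
      intro b; rw [negMulLog, neg_mul, ← sum_mul, ← hmB]
    rw [sum_congr rfl fun a _ => hA a, sum_congr rfl fun b _ => hB b, sum_product]
    simp only [sum_neg_distrib, sum_sub_distrib, negMulLog, neg_mul]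
    rw [sum_comm (s := univ.image B)]
    ring
  have hmass : ∑ a ∈ univ.image A, ∑ b ∈ univ.image B, (P a b - pr p A a * pr p B b) = 0 := by
    simp only [sum_sub_distrib, ← sum_mul_sum, ← hmA, sum_pr, hp.2]
    norm_num
  rw [mutInfo, ent_eq_sum_negMulLog p A subset_rfl, ent_eq_sum_negMulLog p B subset_rfl,
    ent_eq_sum_negMulLog p _ (image_pair_subset_product A B), ← add_div, ← sub_div, hnum]
  refine div_nonneg (hmass ▸ sum_le_sum fun a _ => sum_le_sum fun b _ => ?_)
    (log_nonneg one_le_two)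
  exact sub_mul_le_mul_log_sub (pr_nonneg hp.1 _ _) (pr_pair_le_fst hp.1 A B a b)
    (pr_pair_le_snd hp.1 A B a b)

/-- The law `p` conditioned on `C = c`; it is the zero function when `pr p C c = 0`. -/
noncomputable def condPMF (p : Ω → ℝ) (C : Ω → γ) (c : γ) : Ω → ℝ :=
  fun ω => if C ω = c then p ω / pr p C c else 0

lemma condPMF_nonneg {p : Ω → ℝ} (hp : ∀ ω, 0 ≤ p ω) (C : Ω → γ) (c : γ) (ω : Ω) :
    0 ≤ condPMF p C c ω := by
  unfold condPMF
  split_ifs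
  exacts [div_nonneg (hp ω) (pr_nonneg hp C c), le_rfl]

lemma sum_condPMF (p : Ω → ℝ) (C : Ω → γ) (c : γ) :
    ∑ ω, condPMF p C c ω = pr p C c / pr p C c := by
  rw [pr, sum_div, sum_filter]
  rfl

lemma IsPMF.condPMF {p : Ω → ℝ} (hp : IsPMF p) {C : Ω → γ} {c : γ} (hc : pr p C c ≠ 0) :
    IsPMF (condPMF p C c) :=
  ⟨condPMF_nonneg hp.1 C c, by rw [sum_condPMF, div_self hc]⟩

lemma IsPMF.pr [Fintype α] {p : Ω → ℝ} (hp : IsPMF p) (A : Ω → α) : IsPMF (pr p A) :=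
  ⟨pr_nonneg hp.1 A, by rw [← hp.2]; exact sum_fiberwise univ A p⟩

lemma pr_condPMF (p : Ω → ℝ) (C : Ω → γ) (c : γ) (A : Ω → α) (a : α) :
    pr (condPMF p C c) A a = pr p (fun ω => (A ω, C ω)) (a, c) / pr p C c := by
  simp only [pr, condPMF, ← sum_filter, filter_filter, Prod.mk.injEq, sum_div]

lemma pr_pair_eq_mul_pr_condPMF {p : Ω → ℝ} (hp : ∀ ω, 0 ≤ p ω) (A : Ω → α) (C : Ω → γ)
    (a : α) (c : γ) :
    pr p (fun ω => (A ω, C ω)) (a, c) = pr p C c * pr (condPMF p C c) A a := by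
  rw [pr_condPMF]
  rcases eq_or_ne (pr p C c) 0 with h0 | h0
  · rw [h0, zero_mul]
    exact le_antisymm (h0 ▸ pr_pair_le_snd hp A C a c) (pr_nonneg hp _ _)
  · field_simp

lemma negMulLog_mul_sum_pr_condPMF (p : Ω → ℝ) (A : Ω → α) (C : Ω → γ) (c : γ) :
    negMulLog (pr p C c) * ∑ a ∈ univ.image A, pr (condPMF p C c) A a = negMulLog (pr p C c) := by
  rw [sum_pr, sum_condPMF]
  rcases eq_or_ne (pr p C c) 0 with h0 | h0
  · rw [h0, negMulLog_zero, zero_mul]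
  · rw [div_self h0, mul_one]

lemma ent_pair_eq_add_sum {p : Ω → ℝ} (hp : ∀ ω, 0 ≤ p ω) (A : Ω → α) (C : Ω → γ) :
    ent p (fun ω => (A ω, C ω))
      = ent p C + ∑ c ∈ univ.image C, pr p C c * ent (condPMF p C c) A := by
  have hslice : ∀ c, ∑ a ∈ univ.image A, negMulLog (pr p (fun ω => (A ω, C ω)) (a, c))
      = negMulLog (pr p C c)
        + pr p C c * ∑ a ∈ univ.image A, negMulLog (pr (condPMF p C c) A a) := by
    intro c
    simp only [pr_pair_eq_mul_pr_condPMF hp A C _ c, negMulLog_mul, sum_add_distrib, ← mul_sum,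
      mul_comm _ (negMulLog (pr p C c)), negMulLog_mul_sum_pr_condPMF]
  simp only [ent_eq_sum_negMulLog _ _ (image_pair_subset_product A C),
    ent_eq_sum_negMulLog _ _ subset_rfl, sum_product_right,
    hslice, sum_add_distrib, add_div, sum_div, mul_div_assoc]

lemma condMutInfo_eq_sum {p : Ω → ℝ} (hp : ∀ ω, 0 ≤ p ω) (A : Ω → α) (B : Ω → β) (C : Ω → γ) :
    condMutInfo p A B C = ∑ c ∈ univ.image C, pr p C c * mutInfo (condPMF p C c) A B := by
  have hassoc :=
    ent_comp_of_injective p (fun ω => ((A ω, B ω), C ω)) (Equiv.prodAssoc α β γ).injective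
  simp only [Equiv.prodAssoc_apply] at hassoc
  rw [condMutInfo, hassoc, ent_pair_eq_add_sum hp A C, ent_pair_eq_add_sum hp B C,
    ent_pair_eq_add_sum hp (fun ω => (A ω, B ω)) C]
  simp only [mutInfo, mul_sub, mul_add, sum_sub_distrib, sum_add_distrib]
  ring

lemma pr_condPMF_pair_eq_mul {p : Ω → ℝ} {A : Ω → α} {B : Ω → β} {C : Ω → γ} {f : α → ℝ}
    (hindep : ∀ a b c,
      pr p (fun ω => (A ω, B ω, C ω)) (a, b, c) = f a * pr p (fun ω => (B ω, C ω)) (b, c))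
    (c : γ) (a : α) (b : β) :
    pr (condPMF p C c) (fun ω => (A ω, B ω)) (a, b) = f a * pr (condPMF p C c) B b := by
  rw [pr_condPMF, pr_condPMF, ← mul_div_assoc, ← hindep]
  congr 1
  simpa using (pr_comp_of_injective p (fun ω => ((A ω, B ω), C ω))
    (Equiv.prodAssoc α β γ).injective ((a, b), c)).symm

end InformationMeasures

lemma IsPMF.prod_mul {α β : Type*} [Fintype α] [Fintype β] {f : α → ℝ} {g : β → ℝ}
    (hf : IsPMF f) (hg : IsPMF g) : IsPMF fun v : α × β => f v.1 * g v.2 :=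
  ⟨fun v => mul_nonneg (hf.1 v.1) (hg.1 v.2), by
    rw [Fintype.sum_prod_type, ← Fintype.sum_mul_sum, hf.2, hg.2, one_mul]⟩

lemma Jstar_le_iidMI {mx ms : ℕ} {PX : Fin (mx + 1) → ℝ} (hPX : IsPMF PX)
    {θ : Fin (ms + 1) → ℝ} (hθ : IsPMF θ) : Jstar mx ms PX ≤ iidMI mx ms PX θ :=
  csInf_le ⟨0, by rintro _ ⟨θ', hθ', rfl⟩; exact mutInfo_nonneg (hPX.prod_mul hθ') _ _⟩
    ⟨θ, hθ, rfl⟩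

lemma mutInfo_condPMF_eq_iidMI {Ω γ : Type*} [Fintype Ω] [DecidableEq γ] {mx ms : ℕ}
    {PX : Fin (mx + 1) → ℝ} {p : Ω → ℝ} {Xv : Ω → Fin (mx + 1)} {Sv : Ω → Fin (ms + 1)}
    {Zv : Ω → γ}
    (hindep : ∀ x s z, pr p (fun ω => (Xv ω, Sv ω, Zv ω)) (x, s, z)
      = PX x * pr p (fun ω => (Sv ω, Zv ω)) (s, z)) (z : γ) :
    mutInfo (condPMF p Zv z) (fun ω => ((Sv ω : ℕ) : ℤ) - ((Xv ω : ℕ) : ℤ)) Xv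
      = iidMI mx ms PX (pr (condPMF p Zv z) Sv) :=
  mutInfo_comp_congr (F := fun ω => (Xv ω, Sv ω)) (G := id)
    (fun v => by rw [pr_id, pr_condPMF_pair_eq_mul hindep]) (fun v => ((v.2 : ℕ) : ℤ) - v.1)
    Prod.fst

/-- If `X ~ PX` on `𝒳` is independent of the pair `(S, Z)`, then
`I(S - X; X | Z) ≥ min_θ I(S̃ - X̃; X̃) = J*`. -/
theorem condMutInfo_ge_Jstar (mx ms : ℕ)
    (PX : Fin (mx + 1) → ℝ) (hPX : IsPMF PX)
    {Ω γ : Type*} [Fintype Ω] [DecidableEq γ]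
    (p : Ω → ℝ) (hp : IsPMF p)
    (Xv : Ω → Fin (mx + 1)) (Sv : Ω → Fin (ms + 1)) (Zv : Ω → γ)
    (hindep : ∀ (x : Fin (mx + 1)) (s : Fin (ms + 1)) (z : γ),
      pr p (fun ω => (Xv ω, Sv ω, Zv ω)) (x, s, z)
        = PX x * pr p (fun ω => (Sv ω, Zv ω)) (s, z)) :
    Jstar mx ms PX ≤
      condMutInfo p (fun ω => ((Sv ω : ℕ) : ℤ) - ((Xv ω : ℕ) : ℤ)) Xv Zv := by
  rw [condMutInfo_eq_sum hp.1]
  calc Jstar mx ms PX = ∑ z ∈ univ.image Zv, pr p Zv z * Jstar mx ms PX := by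
        rw [← sum_mul, sum_pr, hp.2, one_mul]
    _ ≤ _ := by
      refine sum_le_sum fun z _ => ?_
      rcases (pr_nonneg hp.1 Zv z).eq_or_lt with hz | hz
      · rw [← hz, zero_mul, zero_mul]
      · rw [mutInfo_condPMF_eq_iidMI hindep]
        exact mul_le_mul_of_nonneg_left
          (Jstar_le_iidMI hPX ((hp.condPMF hz.ne').pr Sv)) hz.le

end SmartMeter
end

section
/- Let {X_t}_{t=1}^T be a Markov chain on 𝒳, let S₁ be independent of X^T, let the battery dynamics S_{t+1} = S_t + Y_t − X_t hold, and suppose that for each t the conditional law of Y_t given (S₁, X^T, Y^{t−1}) depends only on (X_t, S_t, Y^{t−1}) (a policy in the class Q_B). Then equality holds: I(S₁, X^T; Y^T) = Σ_{t=1}^{T} I(X_t, S_t; Y_t | Y^{t−1}). -/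
open Finset
open scoped Classical

namespace SmartMeter

variable {mx my ms T : ℕ}

/-!
Write `H_t = (S₁, X^T, Y^{t-1})`. Summing the product of the policy kernels over the future
outputs shows that the law of `H_t` is `P(S₁) P(X^T) ∏_{i<t} q_i`, so `q_t` is the conditional
law of `Y_t` given `H_t`. As `q_t` sees `H_t` only through `(X_t, S_t, Y^{t-1})`, it is also the
conditional law of `Y_t` given this coarser variable, hence
`H(Y_t | X_t, S_t, Y^{t-1}) = H(Y_t | H_t) = H(H_{t+1}) - H(H_t)`. The `t`-th summand is thus
`[H(Y^t) - H(Y^{t-1})] - [H(H_{t+1}) - H(H_t)]`, and the sum telescopes to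
`H(S₁, X^T) + H(Y^T) - H(S₁, X^T, Y^T)`.
-/

section InformationMeasures

variable {Ω α β γ ζ : Type*} [Fintype Ω] [DecidableEq α] [DecidableEq β] [DecidableEq γ]
  [DecidableEq ζ]

theorem pr_congr (p : Ω → ℝ) {A : Ω → α} {B : Ω → β} (ω : Ω)
    (h : ∀ ω', A ω' = A ω ↔ B ω' = B ω) : pr p A (A ω) = pr p B (B ω) := by
  simp only [pr, h]

theorem pr_pos {p : Ω → ℝ} (hp : ∀ ω, 0 ≤ p ω) (Z : Ω → α) {ω : Ω} (hω : 0 < p ω) :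
    0 < pr p Z (Z ω) :=
  hω.trans_le (single_le_sum (fun ω' _ => hp ω') (by simp))

theorem ent_eq_neg_sum (p : Ω → ℝ) (Z : Ω → α) :
    ent p Z = -∑ ω, p ω * Real.logb 2 (pr p Z (Z ω)) := by
  rw [ent, ← sum_fiberwise_of_maps_to (g := Z) (fun ω _ => mem_image_of_mem Z (mem_univ ω))]
  refine congrArg _ (sum_congr rfl fun z _ => (sum_mul _ _ _).trans (sum_congr rfl fun ω hω => ?_))
  rw [(mem_filter.mp hω).2]

theorem ent_congr_s4 (p : Ω → ℝ) {A : Ω → α} {B : Ω → β}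
    (h : ∀ ω ω', A ω' = A ω ↔ B ω' = B ω) : ent p A = ent p B := by
  simp only [ent_eq_neg_sum, pr_congr p _ (h _)]

theorem ent_of_subsingleton [Subsingleton α] {p : Ω → ℝ} (hp : ∑ ω, p ω = 1) (Z : Ω → α) :
    ent p Z = 0 := by
  have hZ : ∀ ω, pr p Z (Z ω) = 1 := fun ω => by
    rw [pr, filter_true_of_mem fun _ _ => Subsingleton.elim _ _, hp]
  simp [ent_eq_neg_sum, hZ]

theorem sum_eq_sum_image_sum_fiber (V : Ω → γ) {s : Finset Ω}
    (hs : ∀ ω ∈ s, ∀ ω', V ω' = V ω → ω' ∈ s) (f : Ω → ℝ) :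
    ∑ ω ∈ s, f ω = ∑ v ∈ s.image V, ∑ ω with V ω = v, f ω := by
  symm
  refine sum_image' f fun ω hω => sum_congr ?_ fun _ _ => rfl
  ext ω'
  simp only [mem_filter, mem_univ, true_and]
  exact ⟨fun h => ⟨hs ω hω ω' h, h⟩, And.right⟩

/-- If the conditional law `κ` of `Y` given `V` only depends on a coarsening `W` of `V`,
it is also the conditional law of `Y` given `W`. -/
theorem pr_pair_eq_mul_of_condLaw (p : Ω → ℝ) (Y : Ω → ζ) (V : Ω → γ) (W : Ω → β)
    (κ : Ω → ζ → ℝ) (hWV : ∀ ω ω', V ω' = V ω → W ω' = W ω)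
    (hκ : ∀ ω ω', W ω' = W ω → κ ω' = κ ω)
    (hV : ∀ ω y, pr p (fun ω => (Y ω, V ω)) (y, V ω) = pr p V (V ω) * κ ω y)
    (ω : Ω) (y : ζ) :
    pr p (fun ω => (Y ω, W ω)) (y, W ω) = pr p W (W ω) * κ ω y := by
  set s : Finset Ω := {ω' | W ω' = W ω}
  have hs : ∀ ω₁ ∈ s, ∀ ω', V ω' = V ω₁ → ω' ∈ s := fun ω₁ h₁ ω' h => by
    simp only [s, mem_filter, mem_univ, true_and] at h₁ ⊢
    exact (hWV ω₁ ω' h).trans h₁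
  have hfiber : ∀ v ∈ s.image V,
      ∑ ω' with V ω' = v, (if Y ω' = y then p ω' else 0) = ∑ ω' with V ω' = v, p ω' * κ ω y := by
    simp only [mem_image]
    rintro _ ⟨ω₁, h₁, rfl⟩
    rw [← sum_filter, filter_filter, ← sum_mul]
    simp only [s, mem_filter, mem_univ, true_and] at h₁
    rw [← hκ ω ω₁ h₁, show ∑ ω' with V ω' = V ω₁, p ω' = pr p V (V ω₁) from rfl, ← hV]
    simp only [pr, Prod.mk.injEq, and_comm]
  calc pr p (fun ω => (Y ω, W ω)) (y, W ω)
      = ∑ ω' ∈ s, if Y ω' = y then p ω' else 0 := by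
        simp only [pr, s, sum_filter, Prod.mk.injEq, ite_and]
        exact sum_congr rfl fun _ _ => by split_ifs <;> rfl
    _ = ∑ ω' ∈ s, p ω' * κ ω y := by
        rw [sum_eq_sum_image_sum_fiber V hs, sum_eq_sum_image_sum_fiber V hs, sum_congr rfl hfiber]
    _ = pr p W (W ω) * κ ω y := by rw [pr, sum_mul]

theorem condEnt_eq_neg_sum_logb_condLaw {p : Ω → ℝ} (hp : ∀ ω, 0 ≤ p ω) (Y : Ω → ζ)
    (V : Ω → γ) (κ : Ω → ζ → ℝ)
    (hV : ∀ ω y, pr p (fun ω => (Y ω, V ω)) (y, V ω) = pr p V (V ω) * κ ω y) :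
    condEnt p Y V = -∑ ω, p ω * Real.logb 2 (κ ω (Y ω)) := by
  rw [condEnt, ent_eq_neg_sum, ent_eq_neg_sum, sub_eq_add_neg, neg_neg, ← sum_neg_distrib,
    ← sum_add_distrib, ← sum_neg_distrib]
  refine sum_congr rfl fun ω _ => ?_
  rcases (hp ω).eq_or_lt with h | h
  · simp [← h]
  have hYV := pr_pos hp (fun ω => (Y ω, V ω)) h
  have hV' := pr_pos hp V h
  rw [hV] at hYV ⊢
  rw [Real.logb_mul hV'.ne' (pos_of_mul_pos_right hYV hV'.le).ne']
  ring

end InformationMeasures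

section CausalProduct

variable {M : Type*} [CommMonoid M] {n : ℕ}

theorem prod_filter_val_lt_succ (G : Fin n → M) {t : ℕ} (ht : t < n) :
    ∏ i ∈ univ.filter (fun i : Fin n => ↑i < t + 1), G i
      = (∏ i ∈ univ.filter (fun i : Fin n => ↑i < t), G i) * G ⟨t, ht⟩ := by
  have hinsert : univ.filter (fun i : Fin n => ↑i < t + 1)
      = insert ⟨t, ht⟩ (univ.filter fun i : Fin n => ↑i < t) := by
    ext i
    simp only [mem_filter, mem_univ, true_and, mem_insert, Fin.ext_iff]
    omega
  rw [hinsert, prod_insert (by simp), mul_comm]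

/-- Summing a product of successive conditional pmfs (the `i`-th factor depends only on
`y 0, …, y i` and sums to `1` over `y i`) over all continuations of a prefix leaves the
product of the factors of the prefix. -/
theorem sum_prod_eq_prod_of_causal {K : Type*} [Fintype K] [DecidableEq K]
    (F : Fin n → (Fin n → K) → ℝ) (hF : ∀ i y y', (∀ j ≤ i, y j = y' j) → F i y = F i y')
    (hnorm : ∀ i y, ∑ c, F i (Function.update y i c) = 1) {t : ℕ} (ht : t ≤ n)
    (y₀ : Fin n → K) :
    ∑ y ∈ univ.filter (fun y : Fin n → K => ∀ j : Fin n, ↑j < t → y j = y₀ j), ∏ i, F i y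
      = ∏ i ∈ univ.filter (fun i : Fin n => ↑i < t), F i y₀ := by
  induction ht using Nat.decreasingInduction generalizing y₀ with
  | self =>
    have hsingle :
        univ.filter (fun y : Fin n → K => ∀ j : Fin n, ↑j < n → y j = y₀ j) = {y₀} := by
      ext y
      simp only [mem_filter, mem_univ, true_and, mem_singleton, funext_iff]
      exact ⟨fun h j => h j j.isLt, fun h j _ => h j⟩
    rw [hsingle, sum_singleton, filter_true_of_mem fun i _ => i.isLt]
  | of_succ t ht ih =>
    set i₀ : Fin n := ⟨t, ht⟩
    have hne : ∀ j : Fin n, ↑j < t → j ≠ i₀ := fun j hj h => by simp [h, i₀] at hj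
    have hfiber : ∀ c,
        (univ.filter fun y : Fin n → K => ∀ j : Fin n, ↑j < t → y j = y₀ j).filter (· i₀ = c)
          = univ.filter fun y : Fin n → K =>
              ∀ j : Fin n, ↑j < t + 1 → y j = Function.update y₀ i₀ c j := by
      intro c
      ext y
      simp only [mem_filter, mem_univ, true_and]
      constructor
      · rintro ⟨hlt, rfl⟩ j hj
        rcases Nat.lt_succ_iff_lt_or_eq.mp hj with hj | hj
        · rw [Function.update_of_ne (hne j hj), hlt j hj]
        · obtain rfl : j = i₀ := Fin.ext hj
          rw [Function.update_self]
      · intro h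
        refine ⟨fun j hj => ?_, by simpa using h i₀ (Nat.lt_succ_self t)⟩
        rw [h j (by omega), Function.update_of_ne (hne j hj)]
    have hprefix : ∀ c,
        ∏ i ∈ univ.filter (fun i : Fin n => ↑i < t), F i (Function.update y₀ i₀ c)
          = ∏ i ∈ univ.filter (fun i : Fin n => ↑i < t), F i y₀ := fun c =>
      prod_congr rfl fun i hi => hF i _ _ fun j hj =>
        Function.update_of_ne (hne j (lt_of_le_of_lt hj (mem_filter.mp hi).2)) _ _
    rw [← sum_fiberwise _ (fun y => y i₀)]
    simp only [hfiber, ih, prod_filter_val_lt_succ _ ht, hprefix, ← mul_sum]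
    rw [hnorm, mul_one]

theorem sum_prod_eq_one_of_causal {K : Type*} [Fintype K] [DecidableEq K] [Nonempty K]
    (F : Fin n → (Fin n → K) → ℝ) (hF : ∀ i y y', (∀ j ≤ i, y j = y' j) → F i y = F i y')
    (hnorm : ∀ i y, ∑ c, F i (Function.update y i c) = 1) :
    ∑ y, ∏ i, F i y = 1 := by
  simpa using
    sum_prod_eq_prod_of_causal F hF hnorm (Nat.zero_le n) fun _ => Classical.arbitrary K

end CausalProduct

section Trajectory

/-- `Y^{t-1}`, with the outputs read as integers; reducible, so that it is syntactically the
conditioning variable of the theorem. -/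
abbrev outputsBefore (t : ℕ) (ω : Traj mx my ms T) : Fin t → ℤ := fun i => Yat ω i

/-- `(S₁, X^T, Y^{t-1})`. -/
def history (t : ℕ) (ω : Traj mx my ms T) :
    Fin (ms + 1) × (Fin T → Fin (mx + 1)) × (Fin t → ℤ) :=
  (ω.1, ω.2.1, outputsBefore t ω)

/-- The law `q_i(· | x_i, s_i, y^{i-1})` that the policy draws `Y_i` from along `ω`. -/
def policyLaw (q : PolicyB mx my ms) (i : Fin T) (ω : Traj mx my ms T) : Fin (my + 1) → ℝ :=
  q i (ω.2.1 i) (Sat ω i) (prefY ω i)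

theorem jointBMarkov_apply (PS1 : Fin (ms + 1) → ℝ) (PX1 : Fin (mx + 1) → ℝ)
    (Qm : Fin (mx + 1) → Fin (mx + 1) → ℝ) (q : PolicyB mx my ms) (ω : Traj mx my ms T) :
    jointBMarkov PS1 PX1 Qm q T ω
      = PS1 ω.1 * markovWt PX1 Qm ω.2.1 * ∏ i, policyLaw q i ω (ω.2.2 i) := rfl

theorem Xat_of_lt (ω : Traj mx my ms T) {i : ℕ} (h : i < T) : Xat ω i = ω.2.1 ⟨i, h⟩ :=
  dif_pos h

theorem Yat_of_lt (ω : Traj mx my ms T) {i : ℕ} (h : i < T) : Yat ω i = ω.2.2 ⟨i, h⟩ :=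
  dif_pos h

theorem Yat_eq_Yat_iff {ω ω' : Traj mx my ms T} {i : ℕ} (h : i < T) :
    Yat ω i = Yat ω' i ↔ ω.2.2 ⟨i, h⟩ = ω'.2.2 ⟨i, h⟩ := by
  rw [Yat_of_lt ω h, Yat_of_lt ω' h, Nat.cast_inj, Fin.val_inj]

theorem outputsBefore_eq_iff {t : ℕ} (ht : t ≤ T) {ω ω' : Traj mx my ms T} :
    outputsBefore t ω = outputsBefore t ω' ↔ ∀ j : Fin T, ↑j < t → ω.2.2 j = ω'.2.2 j := by
  simp only [funext_iff, outputsBefore]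
  constructor
  · intro h j hj
    exact (Yat_eq_Yat_iff j.isLt).mp (h ⟨j, hj⟩)
  · intro h i
    exact (Yat_eq_Yat_iff (i.isLt.trans_le ht)).mpr (h _ i.isLt)

theorem outputsBefore_succ_eq_iff {t : ℕ} {ω ω' : Traj mx my ms T} :
    outputsBefore (t + 1) ω = outputsBefore (t + 1) ω'
      ↔ Yat ω t = Yat ω' t ∧ outputsBefore t ω = outputsBefore t ω' := by
  simp only [funext_iff, outputsBefore, Fin.forall_fin_succ', Fin.val_castSucc, Fin.val_last]
  exact and_comm

theorem Sat_congr {t : ℕ} {ω ω' : Traj mx my ms T} (h : history t ω = history t ω') :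
    Sat ω t = Sat ω' t := by
  simp only [history, Prod.mk.injEq, funext_iff, outputsBefore] at h
  obtain ⟨h1, h2, h3⟩ := h
  unfold Sat
  rw [h1, ← Fin.sum_univ_eq_sum_range, ← Fin.sum_univ_eq_sum_range]
  simp only [Xat, h2, h3]

theorem prefY_congr {i : Fin T} {ω ω' : Traj mx my ms T}
    (h : outputsBefore i ω = outputsBefore i ω') : prefY ω i = prefY ω' i :=
  funext fun j => (outputsBefore_eq_iff i.isLt.le).mp h ⟨j, j.isLt.trans i.isLt⟩ j.isLt

theorem policyLaw_congr (q : PolicyB mx my ms) {i : Fin T} {ω ω' : Traj mx my ms T}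
    (hx : Xat ω i = Xat ω' i) (hs : Sat ω i = Sat ω' i)
    (hy : outputsBefore i ω = outputsBefore i ω') : policyLaw q i ω = policyLaw q i ω' := by
  rw [Xat_of_lt ω i.isLt, Xat_of_lt ω' i.isLt, Nat.cast_inj, Fin.val_inj] at hx
  simp only [policyLaw, hx, hs, prefY_congr hy]

theorem policyLaw_congr_history (q : PolicyB mx my ms) {i : Fin T} {ω ω' : Traj mx my ms T}
    (h : history i ω = history i ω') : policyLaw q i ω = policyLaw q i ω' := by
  have h' := h
  simp only [history, Prod.mk.injEq] at h'
  exact policyLaw_congr q (by simp only [Xat, h'.2.1]) (Sat_congr h) h'.2.2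

theorem history_succ_eq_iff {t : ℕ} (ht : t < T) {ω ω' : Traj mx my ms T} :
    history (t + 1) ω = history (t + 1) ω'
      ↔ ω.2.2 ⟨t, ht⟩ = ω'.2.2 ⟨t, ht⟩ ∧ history t ω = history t ω' := by
  simp only [history, Prod.mk.injEq, outputsBefore_succ_eq_iff, Yat_eq_Yat_iff ht]
  tauto

theorem history_mk_congr {t : ℕ} (ht : t ≤ T) (a : Fin (ms + 1)) (x : Fin T → Fin (mx + 1))
    {y y' : Fin T → Fin (my + 1)} (h : ∀ j : Fin T, ↑j < t → y j = y' j) :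
    history t ((a, x, y) : Traj mx my ms T) = history t (a, x, y') := by
  simp only [history, (outputsBefore_eq_iff (ω := (a, x, y)) (ω' := (a, x, y')) ht).mpr h]

theorem history_mk_eq_history_iff {t : ℕ} (ht : t ≤ T) (ω : Traj mx my ms T)
    (a : Fin (ms + 1)) (x : Fin T → Fin (mx + 1)) (y : Fin T → Fin (my + 1)) :
    history t ((a, x, y) : Traj mx my ms T) = history t ω
      ↔ a = ω.1 ∧ x = ω.2.1 ∧ ∀ j : Fin T, ↑j < t → y j = ω.2.2 j := by
  simp only [history, Prod.mk.injEq, outputsBefore_eq_iff ht]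

theorem mutInfo_eq_ent_history (p : Traj mx my ms T → ℝ) :
    mutInfo p (fun ω => (ω.1, ω.2.1)) (fun ω => ω.2.2)
      = ent p (history 0) + ent p (outputsBefore T) - ent p (history T) := by
  have hY : ∀ ω ω' : Traj mx my ms T, ω'.2.2 = ω.2.2 ↔ outputsBefore T ω' = outputsBefore T ω :=
    fun ω ω' => by rw [outputsBefore_eq_iff le_rfl, funext_iff]; simp
  have h0 : ent p (fun ω => (ω.1, ω.2.1)) = ent p (history 0) :=
    ent_congr_s4 p fun ω ω' => by
      simp only [history, Prod.mk.injEq, eq_iff_true_of_subsingleton, and_true]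
  have hT : ent p (fun ω => ((ω.1, ω.2.1), ω.2.2)) = ent p (history T) :=
    ent_congr_s4 p fun ω ω' => by simp only [history, Prod.mk.injEq, hY, and_assoc]
  rw [mutInfo, h0, ent_congr_s4 p hY, hT]

end Trajectory

section JointLaw

variable {PS1 : Fin (ms + 1) → ℝ} {PX1 : Fin (mx + 1) → ℝ}
  {Qm : Fin (mx + 1) → Fin (mx + 1) → ℝ} {q : PolicyB mx my ms}

theorem sum_markovWt (hPX1 : IsPMF PX1) (hQm : ∀ x, IsPMF (Qm x)) :
    ∑ x : Fin T → Fin (mx + 1), markovWt PX1 Qm x = 1 := by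
  refine sum_prod_eq_one_of_causal _ (fun i x x' h => ?_) (fun i x => ?_)
  · have hprev : (⟨i - 1, (Nat.sub_le _ _).trans_lt i.isLt⟩ : Fin T) ≤ i :=
      Fin.le_def.mpr (Nat.sub_le _ _)
    simp only [h i le_rfl, h _ hprev]
  · split_ifs with hi
    · simpa using hPX1.2
    · have hprev : (⟨i - 1, (Nat.sub_le _ _).trans_lt i.isLt⟩ : Fin T) ≠ i := fun h =>
        hi (by rw [Fin.ext_iff] at h; dsimp at h; omega)
      simpa [Function.update_of_ne hprev] using (hQm _).2

theorem sum_policyLaw_update (hq : CondPMFB q) (a : Fin (ms + 1)) (x : Fin T → Fin (mx + 1))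
    (i : Fin T) (y : Fin T → Fin (my + 1)) :
    ∑ c, policyLaw q i (a, x, Function.update y i c) (Function.update y i c i) = 1 := by
  have hpast : ∀ c, policyLaw q i (a, x, Function.update y i c) = policyLaw q i (a, x, y) :=
    fun c => policyLaw_congr_history q <| history_mk_congr i.isLt.le a x fun j hj =>
      Function.update_of_ne (fun h => by simp [h] at hj) _ _
  simp only [hpast, Function.update_self]
  exact (hq _ _ _ _).2

theorem policyLaw_causal (a : Fin (ms + 1)) (x : Fin T → Fin (mx + 1)) (i : Fin T)
    (y y' : Fin T → Fin (my + 1)) (h : ∀ j ≤ i, y j = y' j) :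
    policyLaw q i (a, x, y) (y i) = policyLaw q i (a, x, y') (y' i) := by
  rw [policyLaw_congr_history q (history_mk_congr i.isLt.le a x fun j hj => h j hj.le),
    h i le_rfl]

theorem jointBMarkov_nonneg (hPS1 : IsPMF PS1) (hPX1 : IsPMF PX1) (hQm : ∀ x, IsPMF (Qm x))
    (hq : CondPMFB q) (ω : Traj mx my ms T) : 0 ≤ jointBMarkov PS1 PX1 Qm q T ω := by
  refine mul_nonneg (mul_nonneg (hPS1.1 _) (prod_nonneg fun i _ => ?_))
    (prod_nonneg fun i _ => (hq _ _ _ _).1 _)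
  split_ifs
  exacts [hPX1.1 _, (hQm _).1 _]

theorem sum_jointBMarkov (hPS1 : IsPMF PS1) (hPX1 : IsPMF PX1) (hQm : ∀ x, IsPMF (Qm x))
    (hq : CondPMFB q) : ∑ ω : Traj mx my ms T, jointBMarkov PS1 PX1 Qm q T ω = 1 := by
  have hpolicy : ∀ a x, ∑ y : Fin T → Fin (my + 1), ∏ i, policyLaw q i (a, x, y) (y i) = 1 :=
    fun a x => sum_prod_eq_one_of_causal _ (policyLaw_causal a x) (sum_policyLaw_update hq a x)
  simp only [Fintype.sum_prod_type, jointBMarkov_apply, ← mul_sum, hpolicy, mul_one,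
    sum_markovWt hPX1 hQm, hPS1.2]

theorem pr_history (hq : CondPMFB q) {t : ℕ} (ht : t ≤ T) (ω : Traj mx my ms T) :
    pr (jointBMarkov PS1 PX1 Qm q T) (history t) (history t ω)
      = PS1 ω.1 * markovWt PX1 Qm ω.2.1
          * ∏ i ∈ univ.filter (fun i : Fin T => ↑i < t), policyLaw q i ω (ω.2.2 i) := by
  obtain ⟨a₀, x₀, y₀⟩ := ω
  rw [← sum_prod_eq_prod_of_causal _ (policyLaw_causal a₀ x₀) (sum_policyLaw_update hq a₀ x₀)
    ht y₀, mul_sum, pr, sum_filter, sum_filter]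
  simp only [Fintype.sum_prod_type, history_mk_eq_history_iff ht, ite_and]
  simp [sum_ite_eq', jointBMarkov_apply]

theorem pr_history_succ (hq : CondPMFB q) {t : ℕ} (ht : t < T) (ω : Traj mx my ms T) :
    pr (jointBMarkov PS1 PX1 Qm q T) (history (t + 1)) (history (t + 1) ω)
      = pr (jointBMarkov PS1 PX1 Qm q T) (history t) (history t ω)
          * policyLaw q ⟨t, ht⟩ ω (ω.2.2 ⟨t, ht⟩) := by
  rw [pr_history hq ht, pr_history hq ht.le, prod_filter_val_lt_succ _ ht]
  ring

theorem pr_output_history (hq : CondPMFB q) {t : ℕ} (ht : t < T) (ω : Traj mx my ms T)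
    (c : Fin (my + 1)) :
    pr (jointBMarkov PS1 PX1 Qm q T) (fun ω => (ω.2.2 ⟨t, ht⟩, history t ω)) (c, history t ω)
      = pr (jointBMarkov PS1 PX1 Qm q T) (history t) (history t ω)
          * policyLaw q ⟨t, ht⟩ ω c := by
  set ωc : Traj mx my ms T := (ω.1, ω.2.1, Function.update ω.2.2 ⟨t, ht⟩ c)
  have hhist : history t ωc = history t ω :=
    history_mk_congr ht.le _ _ fun j hj => Function.update_of_ne (fun h => by simp [h] at hj) _ _
  have hc : ωc.2.2 ⟨t, ht⟩ = c := Function.update_self ..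
  calc _ = pr (jointBMarkov PS1 PX1 Qm q T) (fun ω => (ω.2.2 ⟨t, ht⟩, history t ω))
          (ωc.2.2 ⟨t, ht⟩, history t ωc) := by rw [hhist, hc]
    _ = pr (jointBMarkov PS1 PX1 Qm q T) (history (t + 1)) (history (t + 1) ωc) :=
        pr_congr _ ωc fun ω' => by rw [Prod.mk.injEq, history_succ_eq_iff ht]
    _ = _ := by
        rw [pr_history_succ hq ht, hhist, hc, policyLaw_congr_history q (i := ⟨t, ht⟩) hhist]

/-- This is where the policy being of class `Q_B` enters. -/
theorem condEnt_output_state_eq (hp : ∀ ω, 0 ≤ jointBMarkov PS1 PX1 Qm q T ω) (hq : CondPMFB q)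
    {t : ℕ} (ht : t < T) :
    condEnt (jointBMarkov PS1 PX1 Qm q T) (fun ω => ω.2.2 ⟨t, ht⟩)
        (fun ω => ((Xat ω t, Sat ω t), outputsBefore t ω))
      = ent (jointBMarkov PS1 PX1 Qm q T) (history (t + 1))
          - ent (jointBMarkov PS1 PX1 Qm q T) (history t) := by
  have hWV : ∀ ω ω' : Traj mx my ms T, history t ω' = history t ω →
      ((Xat ω' t, Sat ω' t), outputsBefore t ω') = ((Xat ω t, Sat ω t), outputsBefore t ω) := by
    intro ω ω' h
    have h' := h
    simp only [history, Prod.mk.injEq] at h'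
    simp only [Xat, h'.2.1, Sat_congr h, h'.2.2]
  have hκ : ∀ ω ω' : Traj mx my ms T,
      ((Xat ω' t, Sat ω' t), outputsBefore t ω') = ((Xat ω t, Sat ω t), outputsBefore t ω) →
      policyLaw q ⟨t, ht⟩ ω' = policyLaw q ⟨t, ht⟩ ω := by
    simp only [Prod.mk.injEq, and_imp]
    exact fun ω ω' => policyLaw_congr q (i := ⟨t, ht⟩)
  have hV := pr_output_history (PS1 := PS1) (PX1 := PX1) (Qm := Qm) hq ht
  rw [condEnt_eq_neg_sum_logb_condLaw hp _ _ _
      (pr_pair_eq_mul_of_condLaw _ _ _ _ _ hWV hκ hV),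
    ← condEnt_eq_neg_sum_logb_condLaw hp _ _ _ hV, condEnt]
  exact congrArg (· - _) (ent_congr_s4 _ fun ω ω' => by rw [Prod.mk.injEq, history_succ_eq_iff ht])

theorem condMutInfo_state_output_eq (hp : ∀ ω, 0 ≤ jointBMarkov PS1 PX1 Qm q T ω) (hq : CondPMFB q)
    {t : ℕ} (ht : t < T) :
    condMutInfo (jointBMarkov PS1 PX1 Qm q T) (fun ω => (Xat ω t, Sat ω t)) (fun ω => Yat ω t)
        (outputsBefore t)
      = (ent (jointBMarkov PS1 PX1 Qm q T) (outputsBefore (t + 1))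
          - ent (jointBMarkov PS1 PX1 Qm q T) (outputsBefore t))
        - (ent (jointBMarkov PS1 PX1 Qm q T) (history (t + 1))
          - ent (jointBMarkov PS1 PX1 Qm q T) (history t)) := by
  set p := jointBMarkov PS1 PX1 Qm q T
  have hYC : ent p (fun ω => (Yat ω t, outputsBefore t ω)) = ent p (outputsBefore (t + 1)) :=
    ent_congr_s4 p fun ω ω' => by rw [Prod.mk.injEq, outputsBefore_succ_eq_iff]
  have hXYC : ent p (fun ω => ((Xat ω t, Sat ω t), Yat ω t, outputsBefore t ω))
      = ent p (fun ω => (ω.2.2 ⟨t, ht⟩, (Xat ω t, Sat ω t), outputsBefore t ω)) :=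
    ent_congr_s4 p fun ω ω' => by simp only [Prod.mk.injEq, Yat_eq_Yat_iff ht]; tauto
  have hcond := condEnt_output_state_eq hp hq ht
  rw [condEnt] at hcond
  rw [condMutInfo, hYC, hXYC]
  linarith

end JointLaw

theorem leakage_eq_sum_condMutInfo_QB_general (mx my ms T : ℕ)
    (PX1 : Fin (mx + 1) → ℝ) (hPX1 : IsPMF PX1)
    (Qm : Fin (mx + 1) → Fin (mx + 1) → ℝ) (hQm : ∀ x, IsPMF (Qm x))
    (PS1 : Fin (ms + 1) → ℝ) (hPS1 : IsPMF PS1)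
    (q : PolicyB mx my ms) (hq : CondPMFB q) :
    mutInfo (jointBMarkov PS1 PX1 Qm q T) (fun ω => (ω.1, ω.2.1)) (fun ω => ω.2.2)
      = ∑ t ∈ Finset.range T,
          condMutInfo (jointBMarkov PS1 PX1 Qm q T)
            (fun ω => (Xat ω t, Sat ω t)) (fun ω => Yat ω t)
            (fun ω => fun i : Fin t => Yat ω (i : ℕ)) := by
  have hp := jointBMarkov_nonneg (T := T) hPS1 hPX1 hQm hq
  rw [mutInfo_eq_ent_history, sum_congr rfl fun t ht =>
      condMutInfo_state_output_eq hp hq (mem_range.mp ht), sum_sub_distrib,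
    sum_range_sub (fun t => ent _ (outputsBefore t)), sum_range_sub (fun t => ent _ (history t)),
    ent_of_subsingleton (sum_jointBMarkov hPS1 hPX1 hQm hq) (outputsBefore 0)]
  ring

/-- For Markov demand, an independent initial battery state, battery
dynamics `S_{t+1} = S_t + Y_t - X_t`, and any policy in the class `Q_B` (the conditional
law of `Y_t` depends only on `(X_t, S_t, Y^{t-1})`), equality holds:
`I(S₁, X^T; Y^T) = Σ_{t=1}^T I(X_t, S_t; Y_t | Y^{t-1})`. -/
theorem leakage_eq_sum_condMutInfo_QB (mx my ms T : ℕ) (hxy : mx ≤ my)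
    (PX1 : Fin (mx + 1) → ℝ) (hPX1 : IsPMF PX1)
    (Qm : Fin (mx + 1) → Fin (mx + 1) → ℝ) (hQm : ∀ x, IsPMF (Qm x))
    (PS1 : Fin (ms + 1) → ℝ) (hPS1 : IsPMF PS1)
    (q : PolicyB mx my ms) (hq : CondPMFB q) :
    mutInfo (jointBMarkov PS1 PX1 Qm q T) (fun ω => (ω.1, ω.2.1)) (fun ω => ω.2.2)
      = ∑ t ∈ Finset.range T,
          condMutInfo (jointBMarkov PS1 PX1 Qm q T)
            (fun ω => (Xat ω t, Sat ω t)) (fun ω => Yat ω t)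
            (fun ω => fun i : Fin t => Yat ω (i : ℕ)) :=
  leakage_eq_sum_condMutInfo_QB_general mx my ms T PX1 hPX1 Qm hQm PS1 hPS1 q hq

end SmartMeter
end
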